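/- The ergodic rate integral (1/ln 2)·∫₀^∞ (1 − F(x))/(1 + x) dx, where F is the CDF of the ISIC near-node SINR, evaluates to the closed form (1/ln 2)·[ (ηρa_n/R_n²)·ln((R_n² + d²)/d²) − ((ηρa_n + d²)/R_n²)·ln(1 + ηρa_n/d²) + ((ηρa_n + d²)/R_n² + 1)·ln(1 + ηρa_n/(R_n² + d²)) ]. -/

import Mathlib

open MeasureTheory Set Real intervalIntegral
open scoped Interval

/-! The complementary CDF `1 - F` is `1` on `(0, χ₁)`, `(ηρaₙ/x - d²)/Rₙ²` on `(χ₁, χ₂)` and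
`0` beyond `χ₂`, so the integral splits into `∫ 1/(1+x)` over `(0, χ₁)` and, after the partial
fraction decomposition `1/(x(1+x)) = 1/x - 1/(1+x)`, a combination of `∫ 1/x` and `∫ 1/(1+x)`
over `(χ₁, χ₂)`. The closed form follows from `χ₂/χ₁ = (Rₙ² + d²)/d²`. -/

theorem setIntegral_Ioi_eq_add_of_eqOn_Ioo {E : Type*} [NormedAddCommGroup E] [NormedSpace ℝ E]
    {μ : Measure ℝ} [NullSingletonClass μ] {g f₁ f₂ : ℝ → E} {a b c : ℝ}
    (hab : a ≤ b) (hbc : b ≤ c)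
    (h₁ : EqOn g f₁ (Ioo a b)) (h₂ : EqOn g f₂ (Ioo b c)) (h₃ : EqOn g 0 (Ioi c))
    (hf₁ : IntervalIntegrable f₁ μ a b) (hf₂ : IntervalIntegrable f₂ μ b c) :
    ∫ x in Ioi a, g x ∂μ = (∫ x in a..b, f₁ x ∂μ) + ∫ x in b..c, f₂ x ∂μ := by
  have hg₁ : IntervalIntegrable g μ a b := hf₁.congr_uIoo (uIoo_of_le hab ▸ h₁.symm)
  have hg₂ : IntervalIntegrable g μ b c := hf₂.congr_uIoo (uIoo_of_le hbc ▸ h₂.symm)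
  have hg₃ : ∀ x ∈ Ioi a \ Ioc a c, g x = 0 := fun x hx =>
    h₃ (not_le.mp fun h => hx.2 ⟨hx.1, h⟩)
  rw [setIntegral_eq_of_subset_of_forall_sdiff_eq_zero measurableSet_Ioi Ioc_subset_Ioi_self hg₃,
    ← integral_of_le (hab.trans hbc), ← integral_add_adjacent_intervals hg₁ hg₂,
    integral_congr_Ioo_of_le hab h₁, integral_congr_Ioo_of_le hbc h₂]

theorem integral_inv_one_add {a b : ℝ} (ha : -1 < a) (hb : -1 < b) :
    ∫ x in a..b, (1 + x)⁻¹ = log ((1 + b) / (1 + a)) := by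
  rw [integral_comp_add_left (fun x => x⁻¹),
    integral_inv (notMem_uIcc_of_lt (by linarith) (by linarith))]

theorem intervalIntegrable_inv_one_add {a b : ℝ} (ha : -1 < a) (hb : -1 < b) :
    IntervalIntegrable (fun x : ℝ => (1 + x)⁻¹) volume a b :=
  intervalIntegrable_inv (fun x hx => by linarith [(lt_min ha hb).trans_le hx.1]) (by fun_prop)

theorem intervalIntegrable_div_sub_div_one_add {A D a b : ℝ} (ha : 0 < a) (hb : 0 < b) :
    IntervalIntegrable (fun x => (A / x - D) / (1 + x)) volume a b := by
  have hpos : ∀ x ∈ [[a, b]], 0 < x := fun x hx => lt_of_lt_of_le (lt_min ha hb) hx.1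
  refine ContinuousOn.intervalIntegrable ?_
  refine ((continuousOn_const.div continuousOn_id fun x hx => (hpos x hx).ne').sub
    continuousOn_const).div (by fun_prop) fun x hx => ?_
  linarith [hpos x hx]

theorem integral_div_sub_div_one_add {A D a b : ℝ} (ha : 0 < a) (hb : 0 < b) :
    ∫ x in a..b, (A / x - D) / (1 + x) =
      A * log (b / a) - (A + D) * log ((1 + b) / (1 + a)) := by
  have hpos : ∀ x ∈ [[a, b]], 0 < x := fun x hx => lt_of_lt_of_le (lt_min ha hb) hx.1
  have hpartial : EqOn (fun x => (A / x - D) / (1 + x))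
      (fun x => A * x⁻¹ - (A + D) * (1 + x)⁻¹) [[a, b]] := by
    intro x hx
    have := hpos x hx
    field_simp
    ring
  have hinv : IntervalIntegrable (fun x : ℝ => x⁻¹) volume a b :=
    intervalIntegrable_inv (fun x hx => (hpos x hx).ne') continuousOn_id
  rw [integral_congr hpartial, integral_sub (hinv.const_mul A)
      ((intervalIntegrable_inv_one_add (by linarith) (by linarith)).const_mul (A + D)),
    intervalIntegral.integral_const_mul, intervalIntegral.integral_const_mul,
    integral_inv fun h => (hpos 0 h).false,
    integral_inv_one_add (by linarith) (by linarith)]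

/-- Closed form of the ISIC near-node ergodic rate
`(1/ln 2) ∫₀^∞ (1 − F(x))/(1 + x) dx`. -/
theorem ergodic_rate_near_ISIC (η ρ an Rn d : ℝ)
    (hη : 0 < η) (hρ : 0 < ρ) (han : 0 < an) (hRn : 0 < Rn) (hd : 0 < d)
    (χ₁ χ₂ : ℝ) (hχ₁ : χ₁ = η * ρ * an / (Rn ^ 2 + d ^ 2)) (hχ₂ : χ₂ = η * ρ * an / d ^ 2)
    (F : ℝ → ℝ)
    (hF : ∀ x : ℝ, 0 ≤ x → F x =
        if x < χ₁ then 0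
        else if x < χ₂ then 1 - (η * ρ * an / x - d ^ 2) / Rn ^ 2
        else 1) :
    (1 / Real.log 2) * ∫ x in Set.Ioi (0 : ℝ), (1 - F x) / (1 + x) =
      (1 / Real.log 2) *
        ((η * ρ * an / Rn ^ 2) * Real.log ((Rn ^ 2 + d ^ 2) / d ^ 2)
          - ((η * ρ * an + d ^ 2) / Rn ^ 2) * Real.log (1 + η * ρ * an / d ^ 2)
          + ((η * ρ * an + d ^ 2) / Rn ^ 2 + 1) *
              Real.log (1 + η * ρ * an / (Rn ^ 2 + d ^ 2))) := by
  set A := η * ρ * an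
  have hA : 0 < A := by positivity
  have hχ₁_pos : 0 < χ₁ := hχ₁ ▸ by positivity
  have hχ₁₂ : χ₁ ≤ χ₂ := by
    rw [hχ₁, hχ₂]
    gcongr
    linarith [pow_pos hRn 2]
  have hχ₂_pos : 0 < χ₂ := hχ₁_pos.trans_le hχ₁₂
  have h₁ : EqOn (fun x => (1 - F x) / (1 + x)) (fun x => (1 + x)⁻¹) (Ioo 0 χ₁) := by
    intro x hx
    simp [hF x hx.1.le, hx.2]
  have h₂ : EqOn (fun x => (1 - F x) / (1 + x))
      (fun x => (A / Rn ^ 2 / x - d ^ 2 / Rn ^ 2) / (1 + x)) (Ioo χ₁ χ₂) := by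
    intro x hx
    simp only [hF x (hχ₁_pos.trans hx.1).le, if_neg (not_lt.mpr hx.1.le), if_pos hx.2]
    ring
  have h₃ : EqOn (fun x => (1 - F x) / (1 + x)) 0 (Ioi χ₂) := by
    intro x (hx : χ₂ < x)
    simp [hF x (hχ₂_pos.trans hx).le, not_lt.mpr (hχ₁₂.trans hx.le), not_lt.mpr hx.le]
  have hratio : χ₂ / χ₁ = (Rn ^ 2 + d ^ 2) / d ^ 2 := by
    rw [hχ₁, hχ₂]
    field_simp
  congr 1
  rw [setIntegral_Ioi_eq_add_of_eqOn_Ioo hχ₁_pos.le hχ₁₂ h₁ h₂ h₃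
      (intervalIntegrable_inv_one_add (by norm_num) (by linarith))
      (intervalIntegrable_div_sub_div_one_add hχ₁_pos hχ₂_pos),
    integral_inv_one_add (by norm_num) (by linarith), add_zero, div_one,
    integral_div_sub_div_one_add hχ₁_pos hχ₂_pos, hratio,
    log_div (by positivity : 1 + χ₂ ≠ 0) (by positivity), ← hχ₁, ← hχ₂]
  ring
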